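/- arXiv:dg-ga/9707011 — 6 statements merged into one kernel-verified Lean document; each statement's English description precedes it below -/
import Mathlib

section
/- Let Γ be a group and F₂ ≤ Γ a free subgroup of rank 2. Then the class [ℂΓ] of the free module of rank 1 is zero in G₀(ℂΓ). -/
/-- The relations subgroup defining `G₀(R)`: for each short exact sequence
`0 → M₀ → M₁ → M₂ → 0` of finitely generated `R`-modules, the element
`[M₁] - [M₀] - [M₂]` of the free abelian group on (finitely generated) modules. -/
def G0Rels (R : Type) [Ring R] :
    AddSubgroup (FreeAbelianGroup {M : ModuleCat R // Module.Finite R M}) :=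
  AddSubgroup.closure
    {x | ∃ (M₀ M₁ M₂ : {M : ModuleCat R // Module.Finite R M})
        (f : M₀.1 →ₗ[R] M₁.1) (g : M₁.1 →ₗ[R] M₂.1),
        Function.Injective f ∧ Function.Surjective g ∧
        LinearMap.range f = LinearMap.ker g ∧
        x = FreeAbelianGroup.of M₁ - FreeAbelianGroup.of M₀ - FreeAbelianGroup.of M₂}

/-- `G₀(R)`, the Grothendieck group of finitely generated `R`-modules. -/
def G0 (R : Type) [Ring R] :=
  FreeAbelianGroup {M : ModuleCat R // Module.Finite R M} ⧸ G0Rels R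



open MonoidAlgebra

@[ext] structure FoxG (G : Type) [Group G] where
  u : G
  d : MonoidAlgebra ℂ G

namespace FoxG
variable {G : Type} [Group G]

noncomputable instance : Group (FoxG G) where
  mul p q := ⟨p.u * q.u, p.d + single p.u (1:ℂ) * q.d⟩
  one := ⟨1, 0⟩
  inv p := ⟨p.u⁻¹, -(single p.u⁻¹ (1:ℂ) * p.d)⟩
  mul_assoc p q r := by
    refine FoxG.ext (mul_assoc _ _ _) ?_
    show (p.d + single p.u 1 * q.d) + single (p.u * q.u) (1:ℂ) * r.d
        = p.d + single p.u 1 * (q.d + single q.u 1 * r.d)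
    have h : single (p.u * q.u) (1:ℂ) = single p.u 1 * single q.u 1 := by
      rw [single_mul_single, one_mul]
    rw [h]; noncomm_ring
  one_mul p := by
    refine FoxG.ext (one_mul _) ?_
    show (0 : MonoidAlgebra ℂ G) + single (1:G) (1:ℂ) * p.d = p.d
    rw [← one_def]; noncomm_ring
  mul_one p := by
    refine FoxG.ext (mul_one _) ?_
    show p.d + single p.u (1:ℂ) * 0 = p.d
    rw [mul_zero, add_zero]
  inv_mul_cancel p := by
    refine FoxG.ext (inv_mul_cancel _) ?_
    show -(single p.u⁻¹ (1:ℂ) * p.d) + single p.u⁻¹ (1:ℂ) * p.d = (0 : MonoidAlgebra ℂ G)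
    abel

@[simp] lemma mul_u (p q : FoxG G) : (p * q).u = p.u * q.u := rfl
@[simp] lemma mul_d (p q : FoxG G) : (p * q).d = p.d + single p.u (1:ℂ) * q.d := rfl
@[simp] lemma one_u : (1 : FoxG G).u = 1 := rfl
@[simp] lemma one_d : (1 : FoxG G).d = 0 := rfl

/-- projection onto the group component -/
def proj : FoxG G →* G where
  toFun := FoxG.u
  map_one' := rfl
  map_mul' _ _ := rfl

@[simp] lemma proj_apply (p : FoxG G) : proj p = p.u := rfl

end FoxG

noncomputable section
namespace Stmt9

abbrev F2 := FreeGroup (Fin 2)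

def χ (i : Fin 2) : F2 →* FoxG F2 :=
  FreeGroup.lift fun j => ⟨FreeGroup.of j, if j = i then 1 else 0⟩

lemma χ_u (i : Fin 2) (w : F2) : (χ i w).u = w := by
  have h : (FoxG.proj.comp (χ i)) = MonoidHom.id F2 := by
    apply FreeGroup.ext_hom
    intro j
    simp [χ, FreeGroup.lift_apply_of]
  have := congrArg (fun f => f w) h
  simpa using this

/-- Fox derivative with respect to generator `i` (on group elements). -/
def fox (i : Fin 2) (w : F2) : MonoidAlgebra ℂ F2 := (χ i w).d

lemma fox_mul_of (i j : Fin 2) (w : F2) :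
    fox i (w * FreeGroup.of j) = fox i w + (if j = i then single w (1:ℂ) else 0) := by
  unfold fox
  have h : χ i (FreeGroup.of j) = ⟨FreeGroup.of j, if j = i then 1 else 0⟩ :=
    FreeGroup.lift_apply_of
  rw [map_mul, h, FoxG.mul_d, χ_u]
  split
  · rw [mul_one]
  · rw [mul_zero]

end Stmt9

namespace Stmt9

variable {Γ : Type} [Group Γ] (φ : F2 →* Γ)

/-- section of `Γ → Γ/φ(F₂)` -/
def sec (g : Γ) : Γ := (QuotientGroup.mk (s := φ.range) g).out

lemma sec_mem (g : Γ) : (sec φ g)⁻¹ * g ∈ φ.range :=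
  QuotientGroup.eq.mp (QuotientGroup.out_eq' (QuotientGroup.mk (s := φ.range) g))

/-- the `F₂`-coordinate of `g` -/
def ug (g : Γ) : F2 := (MonoidHom.mem_range.mp (sec_mem φ g)).choose

lemma sec_spec (g : Γ) : sec φ g * φ (ug φ g) = g := by
  have h := (MonoidHom.mem_range.mp (sec_mem φ g)).choose_spec
  rw [show φ (ug φ g) = (sec φ g)⁻¹ * g from h, mul_inv_cancel_left]

lemma sec_mul (g : Γ) (w : F2) : sec φ (g * φ w) = sec φ g := by
  unfold sec
  congr 1
  rw [QuotientGroup.eq]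
  exact ⟨w⁻¹, by simp [mul_assoc]⟩

lemma ug_mul (hφ : Function.Injective φ) (g : Γ) (w : F2) :
    ug φ (g * φ w) = ug φ g * w := by
  apply hφ
  apply mul_left_cancel (a := sec φ g)
  rw [map_mul, ← mul_assoc, sec_spec, ← sec_mul φ g w, sec_spec]

end Stmt9

namespace Stmt9
variable {Γ : Type} [Group Γ] (φ : F2 →* Γ)

/-- extend `v : Γ → ℂΓ` to a `ℂ`-linear endomap of `ℂΓ` -/
def mkLin (v : Γ → MonoidAlgebra ℂ Γ) : MonoidAlgebra ℂ Γ →ₗ[ℂ] MonoidAlgebra ℂ Γ :=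
  (Finsupp.lsum ℂ fun g => LinearMap.toSpanSingleton ℂ _ (v g)) ∘ₗ
    (MonoidAlgebra.coeffLinearEquiv ℂ).toLinearMap

lemma mkLin_single (v : Γ → MonoidAlgebra ℂ Γ) (g : Γ) (r : ℂ) :
    mkLin v (single g r) = r • v g := by
  have h := Finsupp.lsum_single (S := ℂ)
    (fun g : Γ => LinearMap.toSpanSingleton ℂ (MonoidAlgebra ℂ Γ) (v g)) g r
  exact h.trans (LinearMap.toSpanSingleton_apply ℂ _ (v g) r)

def Φ : MonoidAlgebra ℂ F2 →+* MonoidAlgebra ℂ Γ := mapDomainRingHom ℂ φ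

lemma Φ_single (w : F2) (r : ℂ) : Φ φ (single w r) = single (φ w) r :=
  MonoidAlgebra.mapDomain_single

/-- Fox derivative on `ℂΓ` -/
def DΓ (i : Fin 2) : MonoidAlgebra ℂ Γ →ₗ[ℂ] MonoidAlgebra ℂ Γ :=
  mkLin fun g => single (sec φ g) 1 * Φ φ (fox i (ug φ g))

lemma Dkey (hφ : Function.Injective φ) (i j : Fin 2) (x : MonoidAlgebra ℂ Γ) :
    DΓ φ i (x * (single (φ (FreeGroup.of j)) (1:ℂ) - 1)) = if j = i then x else 0 := by
  induction x using MonoidAlgebra.induction_linear with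
  | zero => rw [zero_mul, map_zero]; split <;> rfl
  | add f g hf hg => rw [add_mul, map_add, hf, hg]; split <;> simp
  | single g r =>
    have h1 : (single g r : MonoidAlgebra ℂ Γ) * (single (φ (FreeGroup.of j)) (1:ℂ) - 1)
        = single (g * φ (FreeGroup.of j)) r - single g r := by
      rw [mul_sub, mul_one, single_mul_single, mul_one]
    rw [h1, map_sub]
    unfold DΓ
    rw [mkLin_single, mkLin_single, sec_mul, ug_mul φ hφ, fox_mul_of, map_add]
    rcases eq_or_ne j i with h | h
    · simp only [h, if_true]
      rw [Φ_single, mul_add, single_mul_single, one_mul, sec_spec]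
      rw [smul_add, add_sub_cancel_left, MonoidAlgebra.smul_single, smul_eq_mul, mul_one]
    · simp only [if_neg h]
      rw [map_zero, add_zero, sub_self]

end Stmt9

namespace Stmt9
variable {Γ : Type} [Group Γ] (φ : F2 →* Γ)

/-- The map `(x, y) ↦ x (a - 1) + y (b - 1)`. -/
def fmap : (MonoidAlgebra ℂ Γ × MonoidAlgebra ℂ Γ) →ₗ[MonoidAlgebra ℂ Γ] MonoidAlgebra ℂ Γ :=
  (LinearMap.toSpanSingleton _ _ (single (φ (FreeGroup.of 0)) 1 - 1)).coprod
  (LinearMap.toSpanSingleton _ _ (single (φ (FreeGroup.of 1)) 1 - 1))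

lemma fmap_apply (x y : MonoidAlgebra ℂ Γ) :
    fmap φ (x, y) = x * (single (φ (FreeGroup.of 0)) 1 - 1)
      + y * (single (φ (FreeGroup.of 1)) 1 - 1) := by
  simp [fmap, LinearMap.toSpanSingleton_apply, smul_eq_mul]

lemma fmap_inj (hφ : Function.Injective φ) : Function.Injective (fmap φ) := by
  have h0 : ∀ p, fmap φ p = 0 → p = 0 := by
    rintro ⟨x, y⟩ h
    rw [fmap_apply] at h
    have hx := congrArg (DΓ φ 0) h
    have hy := congrArg (DΓ φ 1) h
    rw [map_add, Dkey φ hφ 0 0, Dkey φ hφ 0 1, map_zero] at hx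
    rw [map_add, Dkey φ hφ 1 0, Dkey φ hφ 1 1, map_zero] at hy
    simp only [if_true, if_neg (show (1:Fin 2) ≠ 0 by decide),
      if_neg (show (0:Fin 2) ≠ 1 by decide), add_zero, zero_add] at hx hy
    exact Prod.ext hx hy
  intro p q h
  have := h0 (p - q) (by rw [map_sub, h, sub_self])
  exact sub_eq_zero.mp this

/-- homomorphism to `ℤ` killing the second generator -/
def ψh : F2 →* Multiplicative ℤ :=
  FreeGroup.lift fun j => if j = 0 then Multiplicative.ofAdd 1 else 1

/-- `ℤ`-coordinate of `g` -/
def ν (g : Γ) : ℤ := Multiplicative.toAdd (ψh (ug φ g))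

lemma ν_mul (hφ : Function.Injective φ) (g : Γ) (w : F2) :
    ν φ (g * φ w) = ν φ g + Multiplicative.toAdd (ψh w) := by
  unfold ν
  rw [ug_mul φ hφ, map_mul]; rfl

def tF : FoxG Γ := ⟨φ (FreeGroup.of 0), 1⟩

lemma tF_pow_u (n : ℤ) : (tF φ ^ n).u = (φ (FreeGroup.of 0)) ^ n := by
  have h := map_zpow (FoxG.proj) (tF φ) n
  simpa [tF] using h

/-- Fox derivative of `aⁿ` -/
def σ (n : ℤ) : MonoidAlgebra ℂ Γ := (tF φ ^ n).d

lemma σ_succ (n : ℤ) :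
    σ φ (n + 1) = σ φ n + single ((φ (FreeGroup.of 0)) ^ n) 1 := by
  unfold σ
  rw [zpow_add_one, FoxG.mul_d, tF_pow_u]
  show _ + _ * (1 : MonoidAlgebra ℂ Γ) = _
  rw [mul_one]

/-- relative Fox derivative -/
def E : MonoidAlgebra ℂ Γ →ₗ[ℂ] MonoidAlgebra ℂ Γ :=
  mkLin fun g => single (sec φ g) 1 * σ φ (ν φ g)

/-- span of `φ(k) - 1` for `k` in the kernel of `ψ` -/
def Qs : Submodule (MonoidAlgebra ℂ Γ) (MonoidAlgebra ℂ Γ) :=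
  Submodule.span _ {z | ∃ w, ψh w = 1 ∧ z = single (φ w) 1 - 1}

lemma E1 (hφ : Function.Injective φ) (w : F2) (hw : ψh w = 1) (x : MonoidAlgebra ℂ Γ) :
    E φ (x * (single (φ w) 1 - 1)) = 0 := by
  induction x using MonoidAlgebra.induction_linear with
  | zero => rw [zero_mul, map_zero]
  | add f g hf hg => rw [add_mul, map_add, hf, hg, add_zero]
  | single g r =>
    have h1 : (single g r : MonoidAlgebra ℂ Γ) * (single (φ w) (1:ℂ) - 1)
        = single (g * φ w) r - single g r := by
      rw [mul_sub, mul_one, single_mul_single, mul_one]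
    rw [h1, map_sub]
    unfold E
    rw [mkLin_single, mkLin_single, sec_mul, ν_mul φ hφ, hw]
    simp [sub_self]

lemma EQ (hφ : Function.Injective φ) (q : MonoidAlgebra ℂ Γ) (hq : q ∈ Qs φ) :
    E φ q = 0 := by
  have main : ∀ x : MonoidAlgebra ℂ Γ, E φ (x * q) = 0 := by
    refine Submodule.span_induction ?_ ?_ ?_ ?_ hq
    · rintro z ⟨w, hw, rfl⟩ x
      exact E1 φ hφ w hw x
    · intro x; rw [mul_zero, map_zero]
    · intro y z _ _ hy hz x
      rw [mul_add, map_add, hy, hz, add_zero]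
    · intro c z _ hz x
      rw [smul_eq_mul, ← mul_assoc]
      exact hz (x * c)
  have := main 1
  rwa [one_mul] at this

end Stmt9

namespace Stmt9
variable {Γ : Type} [Group Γ] (φ : F2 →* Γ)

lemma ψh_of0 : ψh (FreeGroup.of (0 : Fin 2)) = Multiplicative.ofAdd 1 := by
  unfold ψh; rw [FreeGroup.lift_apply_of]; simp

lemma ψh_of1 : ψh (FreeGroup.of (1 : Fin 2)) = 1 := by
  unfold ψh; rw [FreeGroup.lift_apply_of]; simp

lemma E2 (hφ : Function.Injective φ) (x : MonoidAlgebra ℂ Γ) :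
    (Qs φ).mkQ (E φ (x * (single (φ (FreeGroup.of 0)) 1 - 1))) = (Qs φ).mkQ x := by
  induction x using MonoidAlgebra.induction_linear with
  | zero => rw [zero_mul, map_zero]
  | add f g hf hg => rw [add_mul, map_add, map_add, hf, hg, map_add]
  | single g r =>
    set aa := φ (FreeGroup.of (0 : Fin 2)) with haa
    set n := ν φ g with hn
    set s0 := sec φ g with hs0
    have h1 : (single g r : MonoidAlgebra ℂ Γ) * (single aa (1:ℂ) - 1)
        = single (g * aa) r - single g r := by
      rw [mul_sub, mul_one, single_mul_single, mul_one]
    have hE : E φ ((single g r : MonoidAlgebra ℂ Γ) * (single aa (1:ℂ) - 1))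
        = single (s0 * aa ^ n) r := by
      rw [h1, map_sub]
      unfold E
      rw [mkLin_single, mkLin_single, ← hs0, sec_mul, ν_mul φ hφ, ψh_of0, ← hn]
      have ht : Multiplicative.toAdd (Multiplicative.ofAdd (1:ℤ)) = 1 := rfl
      rw [ht, σ_succ, ← haa, mul_add, single_mul_single, one_mul, smul_add,
        add_sub_cancel_left, MonoidAlgebra.smul_single, smul_eq_mul, mul_one]
    rw [hE]
    set m : F2 := (FreeGroup.of (0:Fin 2)) ^ (-n) * ug φ g with hm
    have hψm : ψh m = 1 := by
      rw [hm, map_mul, map_zpow, ψh_of0]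
      have h2 : ψh (ug φ g) = Multiplicative.ofAdd n := by
        rw [hn]; unfold ν; rfl
      rw [h2, ← ofAdd_zsmul, smul_eq_mul, mul_one, ← ofAdd_add]
      simp
    have hφm : s0 * aa ^ n * φ m = g := by
      rw [hm, map_mul, map_zpow, ← haa]
      calc s0 * aa ^ n * (aa ^ (-n) * φ (ug φ g))
          = s0 * (aa ^ n * aa ^ (-n)) * φ (ug φ g) := by group
        _ = s0 * φ (ug φ g) := by rw [← zpow_add, add_neg_cancel, zpow_zero, mul_one]
        _ = g := sec_spec φ g
    have hmem : single g r - single (s0 * aa ^ n) r ∈ Qs φ := by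
      have heq : (single (s0 * aa ^ n) r : MonoidAlgebra ℂ Γ) * (single (φ m) 1 - 1)
          = single g r - single (s0 * aa ^ n) r := by
        rw [mul_sub, mul_one, single_mul_single, mul_one, hφm]
      rw [← heq]
      have hgen : (single (φ m) 1 - 1 : MonoidAlgebra ℂ Γ) ∈ Qs φ :=
        Submodule.subset_span ⟨m, hψm, rfl⟩
      have := (Qs φ).smul_mem (single (s0 * aa ^ n) r) hgen
      rwa [smul_eq_mul] at this
    rw [Submodule.mkQ_apply, Submodule.mkQ_apply, Submodule.Quotient.eq]
    exact neg_mem_iff.mp (by rwa [neg_sub])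

end Stmt9

namespace Stmt9
variable {Γ : Type} [Group Γ] (φ : F2 →* Γ)

lemma gen_mem (w : F2) :
    (single (φ w) 1 - 1 : MonoidAlgebra ℂ Γ) ∈ LinearMap.range (fmap φ) := by
  induction w using FreeGroup.induction_on with
  | C1 => rw [map_one]; rw [MonoidAlgebra.one_def]; simpa using Submodule.zero_mem _
  | of i =>
    fin_cases i
    · exact ⟨(1, 0), by rw [fmap_apply, one_mul, zero_mul, add_zero]; rfl⟩
    · exact ⟨(0, 1), by rw [fmap_apply, one_mul, zero_mul, zero_add]; rfl⟩
  | inv_of i hi =>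
    show (single (φ ((FreeGroup.of i)⁻¹)) 1 - 1 : MonoidAlgebra ℂ Γ) ∈ LinearMap.range (fmap φ)
    replace hi : (single (φ (FreeGroup.of i)) 1 - 1 : MonoidAlgebra ℂ Γ)
        ∈ LinearMap.range (fmap φ) := hi
    have heq : (single (φ ((FreeGroup.of i)⁻¹)) 1 - 1 : MonoidAlgebra ℂ Γ)
        = (-(single (φ ((FreeGroup.of i)⁻¹)) 1)) * (single (φ (FreeGroup.of i)) 1 - 1) := by
      rw [neg_mul, mul_sub, mul_one, single_mul_single, mul_one, ← map_mul,
        inv_mul_cancel, map_one, ← MonoidAlgebra.one_def]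
      rw [neg_sub]
    rw [heq]
    have := Submodule.smul_mem (LinearMap.range (fmap φ))
      (-(single (φ ((FreeGroup.of i)⁻¹)) 1)) hi
    rwa [smul_eq_mul] at this
  | mul x y hx hy =>
    have heq : (single (φ (x * y)) 1 - 1 : MonoidAlgebra ℂ Γ)
        = single (φ x) 1 * (single (φ y) 1 - 1) + (single (φ x) 1 - 1) := by
      rw [mul_sub, mul_one, single_mul_single, mul_one, ← map_mul]
      abel
    rw [heq]
    refine Submodule.add_mem _ ?_ hx
    have := Submodule.smul_mem (LinearMap.range (fmap φ)) (single (φ x) 1) hy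
    rwa [smul_eq_mul] at this

lemma range_eq :
    LinearMap.range (fmap φ)
      = Submodule.span _ {(single (φ (FreeGroup.of 0)) 1 - 1 : MonoidAlgebra ℂ Γ)} ⊔ Qs φ := by
  apply le_antisymm
  · rw [fmap, LinearMap.range_coprod]
    apply sup_le
    · rw [← LinearMap.span_singleton_eq_range]
      exact le_sup_left
    · rw [← LinearMap.span_singleton_eq_range]
      refine le_trans ?_ le_sup_right
      rw [Submodule.span_le, Set.singleton_subset_iff]
      exact Submodule.subset_span ⟨FreeGroup.of 1, ψh_of1, rfl⟩
  · apply sup_le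
    · rw [Submodule.span_le, Set.singleton_subset_iff]
      exact gen_mem φ (FreeGroup.of 0)
    · rw [Qs, Submodule.span_le]
      rintro z ⟨w, _, rfl⟩
      exact gen_mem φ w

lemma Qs_stab (q : MonoidAlgebra ℂ Γ) (hq : q ∈ Qs φ) :
    q * (single (φ (FreeGroup.of 0)) 1 - 1) ∈ Qs φ := by
  refine Submodule.span_induction ?_ ?_ ?_ ?_ hq
  · rintro z ⟨w, hw, rfl⟩
    set α0 : F2 := FreeGroup.of 0 with hα0
    have hw2 : ψh (α0⁻¹ * w * α0) = 1 := by
      rw [map_mul, map_mul, map_inv, hw, mul_one, inv_mul_cancel]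
    have e1 : (single (φ w) 1 - 1 : MonoidAlgebra ℂ Γ) * (single (φ α0) 1 - 1)
        = single (φ w * φ α0) 1 - single (φ w) 1 - single (φ α0) 1 + 1 := by
      rw [sub_mul, mul_sub, mul_sub, one_mul, mul_one, single_mul_single, mul_one, one_mul]
      abel
    have e2 : (single (φ α0) 1 : MonoidAlgebra ℂ Γ) * (single (φ (α0⁻¹ * w * α0)) 1 - 1)
        = single (φ w * φ α0) 1 - single (φ α0) 1 := by
      rw [mul_sub, mul_one, single_mul_single, mul_one, ← map_mul, ← map_mul]
      have h3 : α0 * (α0⁻¹ * w * α0) = w * α0 := by group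
      rw [h3, map_mul]
    have heq : (single (φ w) 1 - 1 : MonoidAlgebra ℂ Γ) * (single (φ α0) 1 - 1)
        = single (φ α0) 1 * (single (φ (α0⁻¹ * w * α0)) 1 - 1) - (single (φ w) 1 - 1) := by
      rw [e1, e2]; abel
    rw [heq]
    have hmem2 : (single (φ (α0⁻¹ * w * α0)) 1 - 1 : MonoidAlgebra ℂ Γ) ∈ Qs φ :=
      Submodule.subset_span ⟨α0⁻¹ * w * α0, hw2, rfl⟩
    refine Submodule.sub_mem _ ?_ (Submodule.subset_span ⟨w, hw, rfl⟩)
    have := Submodule.smul_mem (Qs φ) (single (φ α0) 1) hmem2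
    rwa [smul_eq_mul] at this
  · rw [zero_mul]; exact Submodule.zero_mem _
  · intro y z _ _ hy hz
    rw [add_mul]; exact Submodule.add_mem _ hy hz
  · intro c z _ hz
    rw [smul_eq_mul, mul_assoc]
    have := Submodule.smul_mem (Qs φ) c hz
    rwa [smul_eq_mul] at this

/-- right multiplication by `a - 1` on `ℂΓ/Q` -/
def θ : (MonoidAlgebra ℂ Γ ⧸ Qs φ) →ₗ[MonoidAlgebra ℂ Γ] (MonoidAlgebra ℂ Γ ⧸ Qs φ) :=
  Submodule.mapQ (Qs φ) (Qs φ)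
    (LinearMap.toSpanSingleton _ _ (single (φ (FreeGroup.of 0)) 1 - 1))
    (fun q hq => by
      simpa [LinearMap.toSpanSingleton_apply, smul_eq_mul] using Qs_stab φ q hq)

lemma θ_mk (x : MonoidAlgebra ℂ Γ) :
    θ φ ((Qs φ).mkQ x) = (Qs φ).mkQ (x * (single (φ (FreeGroup.of 0)) 1 - 1)) := by
  rw [Submodule.mkQ_apply, θ, Submodule.mapQ_apply, LinearMap.toSpanSingleton_apply,
    smul_eq_mul, Submodule.mkQ_apply]

lemma θ_inj (hφ : Function.Injective φ) : Function.Injective (θ φ) := by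
  have h0 : ∀ p, θ φ p = 0 → p = 0 := by
    intro p hp
    obtain ⟨x, rfl⟩ := Submodule.Quotient.mk_surjective _ p
    rw [← Submodule.mkQ_apply, θ_mk] at hp
    rw [Submodule.mkQ_apply, Submodule.Quotient.mk_eq_zero] at hp
    have h1 := E2 φ hφ x
    rw [show E φ (x * (single (φ (FreeGroup.of 0)) 1 - 1)) = 0 from
      EQ φ hφ _ hp, map_zero] at h1
    rw [Submodule.mkQ_apply] at h1
    exact h1.symm
  intro p q h
  have := h0 (p - q) (by rw [map_sub, h, sub_self])
  exact sub_eq_zero.mp this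

/-- projection `ℂΓ/Q → ℂΓ/R₁` -/
def πm : (MonoidAlgebra ℂ Γ ⧸ Qs φ) →ₗ[MonoidAlgebra ℂ Γ]
    (MonoidAlgebra ℂ Γ ⧸ LinearMap.range (fmap φ)) :=
  Submodule.mapQ (Qs φ) (LinearMap.range (fmap φ)) LinearMap.id
    (fun q hq => by
      simp only [Submodule.mem_comap, LinearMap.id_apply]
      rw [range_eq φ]
      exact Submodule.mem_sup_right hq)

lemma πm_mk (x : MonoidAlgebra ℂ Γ) :
    πm φ ((Qs φ).mkQ x) = (LinearMap.range (fmap φ)).mkQ x := by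
  rw [Submodule.mkQ_apply, πm, Submodule.mapQ_apply, LinearMap.id_apply, Submodule.mkQ_apply]

lemma πm_surj : Function.Surjective (πm φ) := by
  intro y
  obtain ⟨x, rfl⟩ := Submodule.Quotient.mk_surjective _ y
  exact ⟨(Qs φ).mkQ x, by rw [πm_mk, Submodule.mkQ_apply]⟩

lemma range_θ_eq_ker_πm : LinearMap.range (θ φ) = LinearMap.ker (πm φ) := by
  apply le_antisymm
  · rintro _ ⟨z, rfl⟩
    obtain ⟨y, rfl⟩ := Submodule.Quotient.mk_surjective _ z
    rw [LinearMap.mem_ker, ← Submodule.mkQ_apply, θ_mk, πm_mk, Submodule.mkQ_apply,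
      Submodule.Quotient.mk_eq_zero]
    exact ⟨(y, 0), by rw [fmap_apply, zero_mul, add_zero]⟩
  · intro p hp
    obtain ⟨x, rfl⟩ := Submodule.Quotient.mk_surjective _ p
    rw [LinearMap.mem_ker, ← Submodule.mkQ_apply, πm_mk, Submodule.mkQ_apply,
      Submodule.Quotient.mk_eq_zero, range_eq φ, Submodule.mem_sup] at hp
    obtain ⟨y, hy, q, hq, rfl⟩ := hp
    rw [Submodule.mem_span_singleton] at hy
    obtain ⟨z, rfl⟩ := hy
    refine ⟨(Qs φ).mkQ z, ?_⟩
    rw [θ_mk, Submodule.mkQ_apply, Submodule.Quotient.eq, smul_eq_mul]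
    simpa using Submodule.neg_mem _ hq

end Stmt9


namespace Stmt9
variable {R : Type} [Ring R]

instance : AddCommGroup (G0 R) :=
  inferInstanceAs
    (AddCommGroup (FreeAbelianGroup {M : ModuleCat R // Module.Finite R M} ⧸ G0Rels R))

lemma G0rel (M₀ M₁ M₂ : {M : ModuleCat R // Module.Finite R M})
    (f : M₀.1 →ₗ[R] M₁.1) (g : M₁.1 →ₗ[R] M₂.1)
    (h1 : Function.Injective f) (h2 : Function.Surjective g)
    (h3 : LinearMap.range f = LinearMap.ker g) :
    (QuotientAddGroup.mk (FreeAbelianGroup.of M₁) : G0 R)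
      = QuotientAddGroup.mk (FreeAbelianGroup.of M₀)
        + QuotientAddGroup.mk (FreeAbelianGroup.of M₂) := by
  have hmem : FreeAbelianGroup.of M₁ - FreeAbelianGroup.of M₀ - FreeAbelianGroup.of M₂
      ∈ G0Rels R :=
    AddSubgroup.subset_closure ⟨M₀, M₁, M₂, f, g, h1, h2, h3, rfl⟩
  show (QuotientAddGroup.mk _ : _ ⧸ G0Rels R) = QuotientAddGroup.mk _ + QuotientAddGroup.mk _
  rw [← QuotientAddGroup.mk_add, QuotientAddGroup.eq]
  have heq : -(FreeAbelianGroup.of M₁) + (FreeAbelianGroup.of M₀ + FreeAbelianGroup.of M₂)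
      = -(FreeAbelianGroup.of M₁ - FreeAbelianGroup.of M₀ - FreeAbelianGroup.of M₂) := by
    abel
  rw [heq]
  exact neg_mem hmem

end Stmt9


/-- If a group `Γ` contains a free subgroup of rank 2, then the class `[ℂΓ]` of the free module
of rank 1 vanishes in `G₀(ℂΓ)`. -/
theorem stmt9 (Γ : Type) [Group Γ] (φ : FreeGroup (Fin 2) →* Γ)
    (hφ : Function.Injective φ) :
    (QuotientAddGroup.mk (FreeAbelianGroup.of
        ⟨ModuleCat.of (MonoidAlgebra ℂ Γ) (MonoidAlgebra ℂ Γ), Module.Finite.self _⟩) :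
      G0 (MonoidAlgebra ℂ Γ)) = 0 := by
  classical
  set R := MonoidAlgebra ℂ Γ with hR
  let MR : {M : ModuleCat R // Module.Finite R M} :=
    ⟨ModuleCat.of R R, Module.Finite.self R⟩
  let MR2 : {M : ModuleCat R // Module.Finite R M} :=
    ⟨ModuleCat.of R (R × R), inferInstanceAs (Module.Finite R (R × R))⟩
  let MN : {M : ModuleCat R // Module.Finite R M} :=
    ⟨ModuleCat.of R (R ⧸ LinearMap.range (Stmt9.fmap φ)),
      inferInstanceAs (Module.Finite R (R ⧸ LinearMap.range (Stmt9.fmap φ)))⟩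
  let MP : {M : ModuleCat R // Module.Finite R M} :=
    ⟨ModuleCat.of R (R ⧸ Stmt9.Qs φ),
      inferInstanceAs (Module.Finite R (R ⧸ Stmt9.Qs φ))⟩
  have e1 : (QuotientAddGroup.mk (FreeAbelianGroup.of MR2) : G0 R)
      = QuotientAddGroup.mk (FreeAbelianGroup.of MR)
        + QuotientAddGroup.mk (FreeAbelianGroup.of MR) :=
    Stmt9.G0rel MR MR2 MR (LinearMap.inl R R R) (LinearMap.snd R R R)
      (LinearMap.inl_injective) (LinearMap.snd_surjective)
      (LinearMap.range_inl R R R)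
  have e2 : (QuotientAddGroup.mk (FreeAbelianGroup.of MR) : G0 R)
      = QuotientAddGroup.mk (FreeAbelianGroup.of MR2)
        + QuotientAddGroup.mk (FreeAbelianGroup.of MN) :=
    Stmt9.G0rel MR2 MR MN (Stmt9.fmap φ) (LinearMap.range (Stmt9.fmap φ)).mkQ
      (Stmt9.fmap_inj φ hφ) (Submodule.Quotient.mk_surjective _)
      (Submodule.ker_mkQ _).symm
  have e3 : (QuotientAddGroup.mk (FreeAbelianGroup.of MP) : G0 R)
      = QuotientAddGroup.mk (FreeAbelianGroup.of MP)
        + QuotientAddGroup.mk (FreeAbelianGroup.of MN) :=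
    Stmt9.G0rel MP MP MN (Stmt9.θ φ) (Stmt9.πm φ)
      (Stmt9.θ_inj φ hφ) (Stmt9.πm_surj φ)
      (Stmt9.range_θ_eq_ker_πm φ)
  have hn : (QuotientAddGroup.mk (FreeAbelianGroup.of MN) : G0 R) = 0 :=
    left_eq_add.mp e3
  rw [hn, add_zero, e1] at e2
  have hA : (QuotientAddGroup.mk (FreeAbelianGroup.of MR) : G0 R) = 0 :=
    right_eq_add.mp e2
  exact hA
end
end

section
/- Let Γ be a group, H, K ≤ Γ. The map φ : (Γ/H)^K → consub(H), gH ↦ (g⁻¹Kg) (the H-conjugacy class of g⁻¹Kg in H), is well-defined and induces an injection from the set of WK-orbits WK\(Γ/H)^K into the set consub(H) of H-conjugacy classes of subgroups of H. -/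
lemma mapconj_mem (Γ : Type) [Group Γ] (K : Subgroup Γ) (a x : Γ) :
    x ∈ K.map (MulAut.conj a).toMonoidHom ↔ a⁻¹ * x * a ∈ K := by
  rw [Subgroup.mem_map_equiv]
  simp [mul_assoc]

lemma mapconj_eq_iff (Γ : Type) [Group Γ] (K : Subgroup Γ) (a b : Γ) :
    K.map (MulAut.conj a).toMonoidHom = K.map (MulAut.conj b).toMonoidHom ↔
      b⁻¹ * a ∈ Subgroup.normalizer (K : Set Γ) := by
  rw [Subgroup.mem_normalizer_iff, SetLike.ext_iff]
  constructor
  · intro hEq y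
    have := hEq (a * y * a⁻¹)
    rw [mapconj_mem, mapconj_mem] at this
    constructor
    · intro hy
      have h1 : a⁻¹ * (a * y * a⁻¹) * a ∈ K := by
        group
        simpa using hy
      have := this.mp h1
      simpa [mul_assoc, mul_inv_rev] using this
    · intro hy
      have h1 : b⁻¹ * (a * y * a⁻¹) * b ∈ K := by
        have : b⁻¹ * (a * y * a⁻¹) * b = b⁻¹ * a * y * (b⁻¹ * a)⁻¹ := by group
        rw [this]; exact hy
      have := this.mpr h1
      group at this
      simpa using this
  · intro hn x
    rw [mapconj_mem, mapconj_mem]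
    constructor
    · intro hx
      have := (hn (a⁻¹ * x * a)).mp hx
      have e : b⁻¹ * a * (a⁻¹ * x * a) * (b⁻¹ * a)⁻¹ = b⁻¹ * x * b := by group
      rwa [e] at this
    · intro hx
      have e : b⁻¹ * a * (a⁻¹ * x * a) * (b⁻¹ * a)⁻¹ = b⁻¹ * x * b := by group
      exact (hn (a⁻¹ * x * a)).mpr (by rwa [e])

/-- The map `φ : (Γ/H)^K → consub(H)`, `gH ↦ (g⁻¹Kg)`, is well-defined and induces an
injection of `WK\(Γ/H)^K` into the `H`-conjugacy classes of subgroups of `H`: for `gH, g'H` in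
`(Γ/H)^K`, the subgroups `g⁻¹Kg` and `g'⁻¹Kg'` are conjugate in `H` if and only if `gH` and
`g'H` lie in the same `WK`-orbit (where `WK = N_Γ(K)/K` acts by left translation). -/
theorem stmt12 (Γ : Type) [Group Γ] (H K : Subgroup Γ) (g g' : Γ)
    (hg : ∀ k ∈ K, g⁻¹ * k * g ∈ H) (hg' : ∀ k ∈ K, g'⁻¹ * k * g' ∈ H) :
    (∃ h ∈ H, (K.map (MulAut.conj g⁻¹).toMonoidHom).map (MulAut.conj h).toMonoidHom =
        K.map (MulAut.conj g'⁻¹).toMonoidHom) ↔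
      ∃ n ∈ Subgroup.normalizer (K : Set Γ), g'⁻¹ * n * g ∈ H := by
  have hcomp : ∀ h : Γ, (K.map (MulAut.conj g⁻¹).toMonoidHom).map (MulAut.conj h).toMonoidHom =
      K.map (MulAut.conj (h * g⁻¹)).toMonoidHom := by
    intro h
    rw [Subgroup.map_map]
    congr 1
    ext x
    simp [MulAut.conj, mul_assoc]
  constructor
  · rintro ⟨h, hH, hEq⟩
    rw [hcomp, mapconj_eq_iff] at hEq
    refine ⟨g' * h * g⁻¹, by simpa [mul_assoc] using hEq, ?_⟩
    have : g'⁻¹ * (g' * h * g⁻¹) * g = h := by group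
    rw [this]; exact hH
  · rintro ⟨n, hn, hH⟩
    refine ⟨g'⁻¹ * n * g, hH, ?_⟩
    rw [hcomp, mapconj_eq_iff]
    have : (g'⁻¹)⁻¹ * (g'⁻¹ * n * g * g⁻¹) = n := by group
    rw [this]; exact hn
end

section
/- Let Γ be a group, H ≤ Γ a finite subgroup, and K ≤ Γ a finite subgroup. Then the set (Γ/H)^K = { gH | g⁻¹Kg ⊆ H } decomposes as a finite union of WK-orbits, each of the form WK/L for some finite subgroup L ≤ WK. -/
/-- If `H` and `K` are finite subgroups of a group `Γ`, then `(Γ/H)^K` decomposes into finitely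
many `WK`-orbits (`WK = N_Γ(K)/K`), each of the form `WK/L` for a finite subgroup `L ≤ WK`:
there is a finite set of points of `(Γ/H)^K` meeting every `N_Γ(K)`-orbit, and the stabilizer
of each point of `(Γ/H)^K`, viewed inside `WK`, is finite. -/
theorem stmt13 (Γ : Type) [Group Γ] (H K : Subgroup Γ) [Finite ↥H] [Finite ↥K] :
    (∃ T : Finset (Γ ⧸ H), ↑T ⊆ MulAction.fixedPoints K (Γ ⧸ H) ∧
      ∀ x ∈ MulAction.fixedPoints K (Γ ⧸ H), ∃ y ∈ T, ∃ n : (Subgroup.normalizer (K : Set Γ)), n • y = x) ∧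
    ∀ x ∈ MulAction.fixedPoints K (Γ ⧸ H),
      Finite (Subgroup.map (QuotientGroup.mk' (K.subgroupOf (Subgroup.normalizer (K : Set Γ))))
        (MulAction.stabilizer (Subgroup.normalizer (K : Set Γ)) x)) := by
  classical
  have hfix : ∀ x ∈ MulAction.fixedPoints K (Γ ⧸ H), ∀ k ∈ K, x.out⁻¹ * k * x.out ∈ H := by
    intro x hx k hk
    have := hx ⟨k, hk⟩
    change (k : Γ) • x = x at this
    conv_rhs at this => rw [← QuotientGroup.out_eq' x]
    rw [← QuotientGroup.out_eq' x, MulAction.Quotient.smul_mk, QuotientGroup.eq] at this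
    simpa [mul_assoc] using (H.inv_mem this)
  constructor
  · set FP := MulAction.fixedPoints K (Γ ⧸ H) with hFP
    set f : Γ ⧸ H → Set Γ := fun x => (fun g => x.out⁻¹ * g * x.out) '' (K : Set Γ) with hf
    have himg : (f '' FP).Finite := by
      apply Set.Finite.subset (Set.Finite.finite_subsets (H : Set Γ).toFinite)
      rintro _ ⟨x, hx, rfl⟩
      rintro _ ⟨k, hk, rfl⟩
      exact hfix x hx k hk
    have hch : ∀ v ∈ f '' FP, ∃ x, x ∈ FP ∧ f x = v := fun v hv => hv
    choose! sec h1 h2 using hch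
    refine ⟨himg.toFinset.image sec, ?_, ?_⟩
    · intro y hy
      simp only [Finset.coe_image, Set.mem_image, Set.Finite.coe_toFinset] at hy
      obtain ⟨v, hv, rfl⟩ := hy
      exact h1 v hv
    · intro x hx
      have hv : f x ∈ f '' FP := ⟨x, hx, rfl⟩
      refine ⟨sec (f x), ?_, ?_⟩
      · simp only [Finset.mem_image, Set.Finite.mem_toFinset]
        exact ⟨f x, hv, rfl⟩
      set y := sec (f x) with hy
      have hfy : f y = f x := h2 _ hv
      have hn : x.out * y.out⁻¹ ∈ Subgroup.normalizer (K : Set Γ) := by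
        rw [Subgroup.mem_normalizer_iff]
        intro k
        constructor
        · intro hk
          have hm : y.out⁻¹ * k * y.out ∈ f y := ⟨k, hk, rfl⟩
          rw [hfy] at hm
          obtain ⟨k', hk', hkk'⟩ := hm
          have hkk2 : x.out⁻¹ * k' * x.out = y.out⁻¹ * k * y.out := hkk'
          have h4 : x.out * y.out⁻¹ * k * (x.out * y.out⁻¹)⁻¹ = k' :=
            calc x.out * y.out⁻¹ * k * (x.out * y.out⁻¹)⁻¹
                = x.out * (y.out⁻¹ * k * y.out) * x.out⁻¹ := by group
              _ = x.out * (x.out⁻¹ * k' * x.out) * x.out⁻¹ := by rw [hkk2]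
              _ = k' := by group
          rw [h4]; exact hk'
        · intro hk
          have hm : x.out⁻¹ * (x.out * y.out⁻¹ * k * (x.out * y.out⁻¹)⁻¹) * x.out ∈ f x :=
            ⟨_, hk, rfl⟩
          rw [← hfy] at hm
          obtain ⟨k', hk', hkk'⟩ := hm
          have hkk2 : y.out⁻¹ * k' * y.out
              = x.out⁻¹ * (x.out * y.out⁻¹ * k * (x.out * y.out⁻¹)⁻¹) * x.out := hkk'
          have h4 : k = k' :=
            calc k = y.out * (x.out⁻¹ * (x.out * y.out⁻¹ * k * (x.out * y.out⁻¹)⁻¹) * x.out)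
                * y.out⁻¹ := by group
              _ = y.out * (y.out⁻¹ * k' * y.out) * y.out⁻¹ := by rw [hkk2]
              _ = k' := by group
          rw [h4]; exact hk'
      refine ⟨⟨_, hn⟩, ?_⟩
      change (x.out * y.out⁻¹ : Γ) • y = x
      have hs := MulAction.Quotient.smul_mk H (x.out * y.out⁻¹) y.out
      rw [QuotientGroup.out_eq'] at hs
      rw [hs]
      simp only [smul_eq_mul, inv_mul_cancel_right, mul_assoc]
      simp [QuotientGroup.out_eq']
  · intro x hx
    have : Finite (MulAction.stabilizer (Subgroup.normalizer (K : Set Γ)) x) := by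
      refine Finite.of_injective (fun n => (⟨x.out⁻¹ * n.1 * x.out, ?_⟩ : H)) ?_
      · obtain ⟨⟨n, hnN⟩, hn⟩ := n
        have hsmul : (n : Γ) • x = x := hn
        conv_rhs at hsmul => rw [← QuotientGroup.out_eq' x]
        rw [← QuotientGroup.out_eq' x, MulAction.Quotient.smul_mk, QuotientGroup.eq] at hsmul
        simpa [mul_assoc] using H.inv_mem hsmul
      · intro a b hab
        have h := congrArg Subtype.val hab
        simp only at h
        ext
        exact mul_left_cancel (mul_right_cancel h)
    exact Set.Finite.to_subtype ((Set.toFinite _).image _)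
end

section
/- Let Γ be a group with only finitely many conjugacy classes of finite subgroups, represented by H₁, …, H_r, ordered so that if H_i is subconjugate to H_j then i ≥ j. Define for finite K ≤ Γ the rational number ch_K(Γ/H) = Σ_{(L)} |K| / |H ∩ N_Γ(L)|, summed over H-conjugacy classes (L) of subgroups L ≤ H that are Γ-conjugate to K. Then ch_{H_i}(Γ/H_i) = 1 for all i, and ch_{H_i}(Γ/H_j) = 0 whenever H_i is not subconjugate to H_j in Γ. -/
/-- The `H`-conjugation setoid on the set of subgroups `L ≤ H` which are conjugate in `Γ`
to `K`. -/
def subconjSetoid (Γ : Type) [Group Γ] (K H : Subgroup Γ) :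
    Setoid {L : Subgroup Γ // L ≤ H ∧ ∃ g : Γ, K.map (MulAut.conj g).toMonoidHom = L} where
  r L₁ L₂ := ∃ h ∈ H, L₁.1.map (MulAut.conj h).toMonoidHom = L₂.1
  iseqv := by
    have hconj : ∀ h h' : Γ, (MulAut.conj h').toMonoidHom.comp (MulAut.conj h).toMonoidHom =
        (MulAut.conj (h' * h)).toMonoidHom := by
      intro h h'; ext x; simp [MulAut.conj]; group
    have hone : (MulAut.conj (1 : Γ)).toMonoidHom = MonoidHom.id Γ := by
      ext x; simp [MulAut.conj]
    constructor
    · intro L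
      exact ⟨1, H.one_mem, by rw [hone, Subgroup.map_id]⟩
    · rintro ⟨L₁, hL₁⟩ ⟨L₂, hL₂⟩ ⟨h, hh, hmap⟩
      refine ⟨h⁻¹, H.inv_mem hh, ?_⟩
      rw [← hmap, Subgroup.map_map, hconj, inv_mul_cancel, hone, Subgroup.map_id]
    · rintro ⟨L₁, hL₁⟩ ⟨L₂, hL₂⟩ ⟨L₃, hL₃⟩ ⟨h, hh, hmap⟩ ⟨h', hh', hmap'⟩
      refine ⟨h' * h, H.mul_mem hh' hh, ?_⟩
      rw [← hmap', ← hmap, Subgroup.map_map, hconj]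

/-- The `L²`-character `ch_K(Γ/H) = Σ_{(L)} |K| / |H ∩ N_Γ(L)|`, summed over the
`H`-conjugacy classes `(L)` of subgroups `L ≤ H` that are `Γ`-conjugate to `K`. -/
noncomputable def chK (Γ : Type) [Group Γ] (K H : Subgroup Γ) : ℚ :=
  ∑ᶠ q : Quotient (subconjSetoid Γ K H),
    (Nat.card ↥K : ℚ) / (Nat.card ↥(H ⊓ Subgroup.normalizer q.out.1) : ℚ)

/-- Let `Γ` have finitely many conjugacy classes of finite subgroups, represented by
`H₁, …, H_r`, ordered so that if `H_i` is subconjugate to `H_j` then `i ≥ j`.  Then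
`ch_{H_i}(Γ/H_i) = 1` and `ch_{H_i}(Γ/H_j) = 0` whenever `H_i` is not subconjugate to `H_j`
in `Γ`. -/
theorem stmt14 (Γ : Type) [Group Γ] (r : ℕ) (H : Fin r → Subgroup Γ)
    (hfin : ∀ i, Finite ↥(H i))
    (hcomplete : ∀ L : Subgroup Γ, Finite ↥L →
      ∃ i, ∃ g : Γ, L.map (MulAut.conj g).toMonoidHom = H i)
    (hdist : ∀ i j, i ≠ j → ¬ ∃ g : Γ, (H i).map (MulAut.conj g).toMonoidHom = H j)
    (horder : ∀ i j : Fin r, (∃ g : Γ, (H i).map (MulAut.conj g).toMonoidHom ≤ H j) → j ≤ i) :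
    (∀ i, chK Γ (H i) (H i) = 1) ∧
    (∀ i j, ¬ (∃ g : Γ, (H i).map (MulAut.conj g).toMonoidHom ≤ H j) →
      chK Γ (H i) (H j) = 0) := by
  constructor
  · intro i
    haveI := hfin i
    -- the index subtype is a subsingleton containing ⟨H i, …⟩
    have hcard : ∀ g : Γ, Nat.card ((H i).map (MulAut.conj g).toMonoidHom) = Nat.card (H i) :=
      fun g => (Nat.card_congr
        ((H i).equivMapOfInjective _ (MulAut.conj g).injective).toEquiv).symm
    have hsub : ∀ x : {L : Subgroup Γ // L ≤ H i ∧
        ∃ g : Γ, (H i).map (MulAut.conj g).toMonoidHom = L}, x.1 = H i := by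
      rintro ⟨L, hle, g, hg⟩
      have hc := hcard g
      rw [hg] at hc
      exact Subgroup.eq_of_le_of_card_ge hle hc.ge
    have hsubsing : Subsingleton {L : Subgroup Γ // L ≤ H i ∧
        ∃ g : Γ, (H i).map (MulAut.conj g).toMonoidHom = L} := by
      constructor; intro a b; ext1; rw [hsub a, hsub b]
    haveI := hsubsing
    have x0 : {L : Subgroup Γ // L ≤ H i ∧
        ∃ g : Γ, (H i).map (MulAut.conj g).toMonoidHom = L} :=
      ⟨H i, le_refl _, 1, by
        have : (MulAut.conj (1 : Γ)).toMonoidHom = MonoidHom.id Γ := by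
          ext x; simp [MulAut.conj]
        rw [this, Subgroup.map_id]⟩
    haveI : Unique (Quotient (subconjSetoid Γ (H i) (H i))) :=
      { default := Quotient.mk _ x0
        uniq := fun q => by
          induction q using Quotient.ind with
          | _ a => exact Quotient.sound (by rw [Subsingleton.elim a x0]) }
    rw [chK, finsum_unique]
    have hout : (default : Quotient (subconjSetoid Γ (H i) (H i))).out.1 = H i := hsub _
    rw [hout, inf_of_le_left (Subgroup.le_normalizer)]
    rw [div_self (Nat.cast_ne_zero.mpr Nat.card_pos.ne')]
  · intro i j hnot
    have hE : IsEmpty {L : Subgroup Γ // L ≤ H j ∧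
        ∃ g : Γ, (H i).map (MulAut.conj g).toMonoidHom = L} := by
      constructor
      rintro ⟨L, hle, g, hg⟩
      exact hnot ⟨g, hg ▸ hle⟩
    haveI : IsEmpty (Quotient (subconjSetoid Γ (H i) (H j))) :=
      ⟨fun q => Quotient.ind (motive := fun _ => False) (fun a => hE.elim a) q⟩
    rw [chK, finsum_of_isEmpty]
end

section
/- Let Γ be a group with finitely many conjugacy classes of finite subgroups (H₁), …, (H_r). The global L²-character map ch ⊗ ℚ : A(Γ) ⊗ ℚ → ℚ^r, sending [Γ/H] to (ch_{H₁}(Γ/H), …, ch_{H_r}(Γ/H)) where ch_K(Γ/H) = Σ_{(L) ≤ H, L ∼_Γ K} |K|/|H ∩ N_Γ(L)|, is a ℚ-linear isomorphism. -/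
namespace Matrix

variable {ι α R : Type*} [Fintype ι] [DecidableEq ι] [LinearOrder α] [CommRing R]

theorem BlockTriangular.det_eq_one {M : Matrix ι ι R} {b : ι → α} (hM : M.BlockTriangular b)
    (hdiag : ∀ i, M i i = 1) (hblock : ∀ i j, i ≠ j → b i = b j → M i j = 0) : M.det = 1 := by
  rw [hM.det]
  refine Finset.prod_eq_one fun a _ => ?_
  have hone : M.toSquareBlock b a = 1 := by
    ext ⟨i, hi⟩ ⟨j, hj⟩
    by_cases hij : i = j
    · subst hij
      simp [toSquareBlock_def, hdiag]
    · simp [toSquareBlock_def, hij, hblock i j hij (hi.trans hj.symm)]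
  rw [hone, det_one]

end Matrix

section Character

variable {Γ : Type} [Group Γ]

theorem Subgroup.card_map_conj (K : Subgroup Γ) (g : Γ) :
    Nat.card (K.map (MulAut.conj g).toMonoidHom) = Nat.card K :=
  Subgroup.card_map_of_injective (MulAut.conj g).injective

theorem exists_conj_le_of_chK_ne_zero {K H : Subgroup Γ} (h : chK Γ K H ≠ 0) :
    ∃ g : Γ, K.map (MulAut.conj g).toMonoidHom ≤ H := by
  by_contra hne
  have : IsEmpty (Quotient (subconjSetoid Γ K H)) :=
    ⟨fun q => by obtain ⟨L, hLH, g, rfl⟩ := q.out; exact hne ⟨g, hLH⟩⟩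
  exact h (finsum_of_isEmpty _)

theorem card_le_of_chK_ne_zero {K H : Subgroup Γ} [Finite H] (h : chK Γ K H ≠ 0) :
    Nat.card K ≤ Nat.card H := by
  obtain ⟨g, hg⟩ := exists_conj_le_of_chK_ne_zero h
  exact K.card_map_conj g ▸ Subgroup.card_le_of_le hg

theorem exists_conj_eq_of_chK_ne_zero {K H : Subgroup Γ} [Finite H] (h : chK Γ K H ≠ 0)
    (hcard : Nat.card H ≤ Nat.card K) : ∃ g : Γ, K.map (MulAut.conj g).toMonoidHom = H := by
  obtain ⟨g, hg⟩ := exists_conj_le_of_chK_ne_zero h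
  exact ⟨g, Subgroup.eq_of_le_of_card_ge hg (K.card_map_conj g ▸ hcard)⟩

theorem chK_self (K : Subgroup Γ) [Finite K] : chK Γ K K = 1 := by
  have hK : ∀ L : {L : Subgroup Γ // L ≤ K ∧ ∃ g : Γ, K.map (MulAut.conj g).toMonoidHom = L},
      L.1 = K := by
    rintro ⟨L, hLK, g, rfl⟩
    exact Subgroup.eq_of_le_of_card_ge hLK (K.card_map_conj g).ge
  have : Subsingleton {L : Subgroup Γ // L ≤ K ∧ ∃ g : Γ, K.map (MulAut.conj g).toMonoidHom = L} :=
    ⟨fun L₁ L₂ => Subtype.ext ((hK L₁).trans (hK L₂).symm)⟩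
  have : Unique (Quotient (subconjSetoid Γ K K)) :=
    uniqueOfSubsingleton (Quotient.mk _ ⟨K, le_rfl, 1, by ext; simp⟩)
  rw [chK, finsum_unique, hK, inf_eq_left.mpr Subgroup.le_normalizer]
  exact div_self (Nat.cast_ne_zero.mpr Nat.card_pos.ne')

end Character

theorem stmt16_general (Γ : Type) [Group Γ] (r : ℕ) (H : Fin r → Subgroup Γ)
    (hfin : ∀ i, Finite ↥(H i))
    (hdist : ∀ i j, i ≠ j → ¬ ∃ g : Γ, (H i).map (MulAut.conj g).toMonoidHom = H j) :
    Function.Bijective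
      (Matrix.toLin' (Matrix.of fun k i : Fin r => chK Γ (H k) (H i))) := by
  set M : Matrix (Fin r) (Fin r) ℚ := Matrix.of fun k i => chK Γ (H k) (H i)
  have htri : M.BlockTriangular fun i => Nat.card (H i) := fun k i hlt => by
    by_contra hne
    exact (card_le_of_chK_ne_zero (H := H i) hne).not_gt hlt
  have hblock : ∀ k i, k ≠ i → Nat.card (H k) = Nat.card (H i) → M k i = 0 := by
    intro k i hki hcard
    by_contra hne
    exact hdist k i hki (exists_conj_eq_of_chK_ne_zero (H := H i) hne hcard.ge)
  have hdet : M.det = 1 := htri.det_eq_one (fun i => chK_self (H i)) hblock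
  refine (Module.End.isUnit_iff _).mp (Matrix.isUnit_toLin'_iff.mpr ?_)
  exact (Matrix.isUnit_iff_isUnit_det M).mpr (hdet ▸ isUnit_one)

/-- Let `Γ` be a group with finitely many conjugacy classes of finite subgroups, represented by
pairwise non-conjugate finite subgroups `H₁, …, H_r`.  The global `L²`-character map
`A(Γ) ⊗ ℚ → ℚʳ`, which in the basis `[Γ/H₁], …, [Γ/H_r]` of `A(Γ) ⊗ ℚ` is given by the matrix
`(ch_{H_k}(Γ/H_i))_{k,i}`, is a `ℚ`-linear isomorphism. -/
theorem stmt16 (Γ : Type) [Group Γ] (r : ℕ) (H : Fin r → Subgroup Γ)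
    (hfin : ∀ i, Finite ↥(H i))
    (hcomplete : ∀ L : Subgroup Γ, Finite ↥L →
      ∃ i, ∃ g : Γ, L.map (MulAut.conj g).toMonoidHom = H i)
    (hdist : ∀ i j, i ≠ j → ¬ ∃ g : Γ, (H i).map (MulAut.conj g).toMonoidHom = H j) :
    Function.Bijective
      (Matrix.toLin' (Matrix.of fun k i : Fin r => chK Γ (H k) (H i))) :=
  stmt16_general Γ r H hfin hdist
end

section
/- Let R be a ring equipped with a dimension function dim on finitely generated projective modules that is additive under direct sums, and suppose every finitely generated submodule of a projective R-module is projective. If 0 → M₀ → M₁ → M₂ → 0 is a short exact sequence of R-modules and dim'(M) = sup{dim(P) | P ⊆ M finitely generated projective submodule}, then dim'(M₁) ≥ dim'(M₀) + dim'(M₂). -/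
/-! A finitely generated projective `Q₂ ⊆ M₂` lifts through the surjection `g`; the lift and
`f(Q₀)` together give a copy of `Q₀ × Q₂` inside `M₁`, whose dimension is `d Q₀ + d Q₂`. -/

open scoped NNReal ENNReal

section

variable {R A B M N : Type*} [Ring R] [AddCommGroup A] [Module R A] [AddCommGroup B] [Module R B]
  [AddCommGroup M] [Module R M] [AddCommGroup N] [Module R N]

theorem LinearMap.coprod_injective_of_comp_eq_zero {f : A →ₗ[R] M} {s : B →ₗ[R] M}
    {g : M →ₗ[R] N} (hf : Function.Injective f) (hgf : g ∘ₗ f = 0)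
    (hgs : Function.Injective (g ∘ₗ s)) : Function.Injective (f.coprod s) := by
  rw [injective_iff_map_eq_zero]
  rintro ⟨a, b⟩ hab
  have hb : b = 0 := hgs <| by
    simpa [← LinearMap.comp_apply g f, hgf] using congrArg g hab
  subst hb
  have ha : a = 0 := hf <| by simpa using hab
  simp [ha]

theorem Submodule.exists_equiv_prod_of_comp_eq_zero {f : A →ₗ[R] M} {g : M →ₗ[R] N}
    (hf : Function.Injective f) (hg : Function.Surjective g) (hgf : g ∘ₗ f = 0)
    (Q₀ : Submodule R A) (Q₂ : Submodule R N) [Module.Projective R Q₂] :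
    ∃ Q : Submodule R M, Nonempty ((Q₀ × Q₂) ≃ₗ[R] Q) := by
  obtain ⟨s, hs⟩ := Module.projective_lifting_property g Q₂.subtype hg
  have hinj : Function.Injective ((f ∘ₗ Q₀.subtype).coprod s) := by
    refine LinearMap.coprod_injective_of_comp_eq_zero (g := g) (hf.comp Subtype.val_injective) ?_ ?_
    · rw [← LinearMap.comp_assoc, hgf, LinearMap.zero_comp]
    · rw [hs]
      exact Subtype.val_injective
  exact ⟨_, ⟨LinearEquiv.ofInjective _ hinj⟩⟩

instance Submodule.nonempty_fg_projective :
    Nonempty {Q : Submodule R M // Q.FG ∧ Module.Projective R Q} :=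
  ⟨⟨⊥, Submodule.fg_bot, inferInstance⟩⟩

end

theorem stmt18_general (R : Type) [Ring R]
    (d : ∀ (M : Type) [AddCommGroup M] [Module R M], ℝ≥0)
    (hiso : ∀ (M N : Type) [AddCommGroup M] [Module R M] [AddCommGroup N] [Module R N],
      Module.Finite R M → Module.Projective R M → Module.Finite R N → Module.Projective R N →
      (M ≃ₗ[R] N) → d M = d N)
    (hadd : ∀ (M N : Type) [AddCommGroup M] [Module R M] [AddCommGroup N] [Module R N],
      Module.Finite R M → Module.Projective R M → Module.Finite R N → Module.Projective R N →
      d (M × N) = d M + d N)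
    (M₀ M₁ M₂ : Type) [AddCommGroup M₀] [Module R M₀] [AddCommGroup M₁] [Module R M₁]
    [AddCommGroup M₂] [Module R M₂]
    (f : M₀ →ₗ[R] M₁) (g : M₁ →ₗ[R] M₂)
    (hf : Function.Injective f) (hg : Function.Surjective g)
    (hfg : LinearMap.range f = LinearMap.ker g) :
    (⨆ P : {N : Submodule R M₀ // N.FG ∧ Module.Projective R N}, (d ↥P.1 : ℝ≥0∞)) +
      (⨆ P : {N : Submodule R M₂ // N.FG ∧ Module.Projective R N}, (d ↥P.1 : ℝ≥0∞)) ≤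
    ⨆ P : {N : Submodule R M₁ // N.FG ∧ Module.Projective R N}, (d ↥P.1 : ℝ≥0∞) := by
  refine ENNReal.iSup_add_iSup_le fun ⟨Q₀, hQ₀, _⟩ ⟨Q₂, hQ₂, _⟩ => ?_
  have := Module.Finite.iff_fg.2 hQ₀
  have := Module.Finite.iff_fg.2 hQ₂
  obtain ⟨Q, ⟨e⟩⟩ := Submodule.exists_equiv_prod_of_comp_eq_zero hf hg
    (LinearMap.range_le_ker_iff.1 hfg.le) Q₀ Q₂
  have := Module.Finite.equiv e
  have := Module.Projective.of_equiv e
  have hdQ : d Q = d Q₀ + d Q₂ := by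
    rw [← hadd _ _ inferInstance inferInstance inferInstance inferInstance]
    exact hiso _ _ inferInstance inferInstance inferInstance inferInstance e.symm
  calc (d Q₀ : ℝ≥0∞) + d Q₂ = d Q := by rw [hdQ, ENNReal.coe_add]
    _ ≤ _ := le_iSup_of_le ⟨Q, Module.Finite.iff_fg.1 ‹_›, ‹_›⟩ le_rfl

/-- Let `R` be a semi-hereditary ring with a dimension function `d`, defined on finitely
generated projective modules with values in `[0,∞)`, which depends only on the isomorphism
class and is additive under direct sums.  Let `dim'(M) = sup { d(P) | P ⊆ M f.g. projective }`.
Then for any short exact sequence `0 → M₀ → M₁ → M₂ → 0` of `R`-modules,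
`dim'(M₁) ≥ dim'(M₀) + dim'(M₂)`. -/
theorem stmt18 (R : Type) [Ring R]
    (d : ∀ (M : Type) [AddCommGroup M] [Module R M], ℝ≥0)
    (hiso : ∀ (M N : Type) [AddCommGroup M] [Module R M] [AddCommGroup N] [Module R N],
      Module.Finite R M → Module.Projective R M → Module.Finite R N → Module.Projective R N →
      (M ≃ₗ[R] N) → d M = d N)
    (hadd : ∀ (M N : Type) [AddCommGroup M] [Module R M] [AddCommGroup N] [Module R N],
      Module.Finite R M → Module.Projective R M → Module.Finite R N → Module.Projective R N →
      d (M × N) = d M + d N)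
    (hsh : ∀ (M : Type) [AddCommGroup M] [Module R M], Module.Projective R M →
      ∀ N : Submodule R M, N.FG → Module.Projective R N)
    (M₀ M₁ M₂ : Type) [AddCommGroup M₀] [Module R M₀] [AddCommGroup M₁] [Module R M₁]
    [AddCommGroup M₂] [Module R M₂]
    (f : M₀ →ₗ[R] M₁) (g : M₁ →ₗ[R] M₂)
    (hf : Function.Injective f) (hg : Function.Surjective g)
    (hfg : LinearMap.range f = LinearMap.ker g) :
    (⨆ P : {N : Submodule R M₀ // N.FG ∧ Module.Projective R N}, (d ↥P.1 : ℝ≥0∞)) +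
      (⨆ P : {N : Submodule R M₂ // N.FG ∧ Module.Projective R N}, (d ↥P.1 : ℝ≥0∞)) ≤
    ⨆ P : {N : Submodule R M₁ // N.FG ∧ Module.Projective R N}, (d ↥P.1 : ℝ≥0∞) :=
  stmt18_general R d hiso hadd M₀ M₁ M₂ f g hf hg hfg
end
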